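/- Let Ψ = XᵀX/n with Ψ_{jj} = 1 and max_{j'≠j}|Ψ_{jj'}| ≤ 1/(7αs) for some integer s ≥ 1 and α > 1 (mutual incoherence). Then for every subset S ⊆ {1,…,p} with |S| ≤ s and every nonzero Δ ∈ ℝ^{p×q} with ‖Δ_{Sᶜ}‖_{2,1} ≤ 3‖Δ_S‖_{2,1}, one has (1/n)‖XΔ‖_F² ≥ (1 − 1/α)‖Δ_S‖_F². -/

import Mathlib

open scoped BigOperators
open Matrix Classical

/-- Euclidean norm of a row. -/
noncomputable def rowNorm {q : ℕ} (v : Fin q → ℝ) : ℝ := Real.sqrt (∑ j, (v j) ^ 2)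

/-- `ℓ_{2,1}` norm: sum of row Euclidean norms. -/
noncomputable def norm21 {p q : ℕ} (B : Matrix (Fin p) (Fin q) ℝ) : ℝ :=
  ∑ j, rowNorm (B j)

/-- `ℓ_{2,∞}` norm: maximum of row Euclidean norms. -/
noncomputable def norm2inf {p q : ℕ} (B : Matrix (Fin p) (Fin q) ℝ) : ℝ :=
  ⨆ j, rowNorm (B j)

/-- Frobenius norm of a real matrix. -/
noncomputable def frob {n q : ℕ} (Z : Matrix (Fin n) (Fin q) ℝ) : ℝ :=
  Real.sqrt (∑ i, ∑ j, (Z i j) ^ 2)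

/-- Restriction of a matrix to a set of rows (zero outside `S`). -/
noncomputable def restrict {p q : ℕ} (B : Matrix (Fin p) (Fin q) ℝ) (S : Set (Fin p)) :
    Matrix (Fin p) (Fin q) ℝ :=
  fun j k => if j ∈ S then B j k else 0

/-- Mutual incoherence of the Gram matrix `Ψ = XᵀX/n`. -/
def MutualIncoherence {p : ℕ} (Ψ : Matrix (Fin p) (Fin p) ℝ) (α : ℝ) (s : ℕ) : Prop :=
  (∀ j, Ψ j j = 1) ∧ ∀ j j' : Fin p, j ≠ j' → |Ψ j j'| ≤ 1 / (7 * α * s)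

/-! Put `Ψ = XᵀX/n`, so that `(1/n)‖XΔ‖_F² = tr(ΔᵀΨΔ)`, and split `Δ = A + B` with `A = Δ_S`,
`B = Δ_{Sᶜ}`. As `Ψ` is positive semidefinite, `tr(ΔᵀΨΔ) ≥ tr(AᵀΨ(A + 2B))`. Writing `Ψ = 1 + E`
with `|E_{jj'}| ≤ ε = 1/(7αs)`, the identity contributes `‖A‖_F²` (`A` and `B` live on disjoint
rows) and `E` at most `ε‖A‖_{2,1}‖A + 2B‖_{2,1} ≤ 7ε‖A‖_{2,1}²` by the cone condition.
Finally `‖A‖_{2,1}² ≤ |S|‖A‖_F²` by Cauchy–Schwarz, and `7ε|S| ≤ 1/α`. -/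

lemma rowNorm_eq_norm_toLp {q : ℕ} (v : Fin q → ℝ) : rowNorm v = ‖WithLp.toLp 2 v‖ := by
  simp [rowNorm, EuclideanSpace.norm_eq]

lemma rowNorm_nonneg {q : ℕ} (v : Fin q → ℝ) : 0 ≤ rowNorm v := Real.sqrt_nonneg _

lemma rowNorm_sq {q : ℕ} (v : Fin q → ℝ) : rowNorm v ^ 2 = v ⬝ᵥ v := by
  rw [rowNorm, Real.sq_sqrt (by positivity)]
  simp only [dotProduct, sq]

lemma abs_dotProduct_le_rowNorm_mul {q : ℕ} (v w : Fin q → ℝ) :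
    |v ⬝ᵥ w| ≤ rowNorm v * rowNorm w := by
  simpa [rowNorm_eq_norm_toLp, EuclideanSpace.inner_toLp_toLp, dotProduct_comm] using
    abs_real_inner_le_norm (WithLp.toLp 2 v) (WithLp.toLp 2 w)

lemma norm21_add_le {p q : ℕ} (B C : Matrix (Fin p) (Fin q) ℝ) :
    norm21 (B + C) ≤ norm21 B + norm21 C := by
  simp only [norm21, ← Finset.sum_add_distrib, rowNorm_eq_norm_toLp]
  exact Finset.sum_le_sum fun j _ => norm_add_le (WithLp.toLp 2 (B j)) (WithLp.toLp 2 (C j))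

lemma norm21_smul {p q : ℕ} (c : ℝ) (B : Matrix (Fin p) (Fin q) ℝ) :
    norm21 (c • B) = |c| * norm21 B := by
  simp only [norm21, Finset.mul_sum, rowNorm_eq_norm_toLp]
  refine Finset.sum_congr rfl fun j _ => ?_
  rw [← Real.norm_eq_abs, ← norm_smul]
  rfl

lemma trace_transpose_mul_eq_sum_dotProduct {m n R : Type*} [Fintype m] [Fintype n]
    [CommSemiring R] (C D : Matrix m n R) : trace (Cᵀ * D) = ∑ j, C j ⬝ᵥ D j := by
  simp only [trace, diag, mul_apply, transpose_apply, dotProduct]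
  exact Finset.sum_comm

lemma trace_transpose_mul_mul_eq_sum {m n R : Type*} [Fintype m] [Fintype n]
    [CommSemiring R] (G : Matrix m m R) (C D : Matrix m n R) :
    trace (Cᵀ * G * D) = ∑ j, ∑ j', G j j' * (C j ⬝ᵥ D j') := by
  rw [Matrix.mul_assoc, trace_transpose_mul_eq_sum_dotProduct]
  simp only [dotProduct, mul_apply, Finset.mul_sum]
  refine Finset.sum_congr rfl fun j _ => ?_
  rw [Finset.sum_comm]
  exact Finset.sum_congr rfl fun _ _ => Finset.sum_congr rfl fun _ _ => by ring

lemma frob_sq_eq_sum_rowNorm_sq {n q : ℕ} (Z : Matrix (Fin n) (Fin q) ℝ) :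
    frob Z ^ 2 = ∑ i, rowNorm (Z i) ^ 2 := by
  rw [frob, Real.sq_sqrt (by positivity)]
  simp only [rowNorm, Real.sq_sqrt (Finset.sum_nonneg fun _ _ => sq_nonneg _)]

lemma frob_sq_eq_trace {n q : ℕ} (Z : Matrix (Fin n) (Fin q) ℝ) :
    frob Z ^ 2 = trace (Zᵀ * Z) := by
  simp only [frob_sq_eq_sum_rowNorm_sq, rowNorm_sq, trace_transpose_mul_eq_sum_dotProduct]

lemma abs_trace_transpose_mul_mul_le {p q : ℕ} {E : Matrix (Fin p) (Fin p) ℝ} {ε : ℝ}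
    (hE : ∀ j j', |E j j'| ≤ ε) (C D : Matrix (Fin p) (Fin q) ℝ) :
    |trace (Cᵀ * E * D)| ≤ ε * (norm21 C * norm21 D) := by
  rw [trace_transpose_mul_mul_eq_sum, norm21, norm21, Finset.sum_mul_sum, Finset.mul_sum]
  refine (Finset.abs_sum_le_sum_abs _ _).trans (Finset.sum_le_sum fun j _ => ?_)
  rw [Finset.mul_sum]
  refine (Finset.abs_sum_le_sum_abs _ _).trans (Finset.sum_le_sum fun j' _ => ?_)
  rw [abs_mul]
  exact mul_le_mul (hE j j') (abs_dotProduct_le_rowNorm_mul _ _) (abs_nonneg _)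
    ((abs_nonneg _).trans (hE j j'))

lemma trace_transpose_mul_sub_le_of_incoherent {p q : ℕ} {Ψ : Matrix (Fin p) (Fin p) ℝ}
    {ε : ℝ} (hε : 0 ≤ ε) (hdiag : ∀ j, Ψ j j = 1) (hoff : ∀ j j', j ≠ j' → |Ψ j j'| ≤ ε)
    (C D : Matrix (Fin p) (Fin q) ℝ) :
    trace (Cᵀ * D) - ε * (norm21 C * norm21 D) ≤ trace (Cᵀ * Ψ * D) := by
  have hE : ∀ j j', |(Ψ - 1) j j'| ≤ ε := by
    intro j j'
    rcases eq_or_ne j j' with rfl | hne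
    · simpa [hdiag] using hε
    · simpa [one_apply_ne hne] using hoff j j' hne
  have hsplit : trace (Cᵀ * Ψ * D) = trace (Cᵀ * D) + trace (Cᵀ * (Ψ - 1) * D) := by
    simp [Matrix.mul_sub, Matrix.sub_mul, trace_sub]
  linarith [neg_abs_le (trace (Cᵀ * (Ψ - 1) * D)), abs_trace_transpose_mul_mul_le hE C D]

lemma trace_add_transpose_mul_mul_add {m n : Type*} [Fintype m] [Fintype n]
    {G : Matrix m m ℝ} (hG : Gᵀ = G) (A B : Matrix m n ℝ) :
    trace ((A + B)ᵀ * G * (A + B)) = trace (Aᵀ * G * (A + (2 : ℝ) • B)) + trace (Bᵀ * G * B) := by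
  have hBA : trace (Bᵀ * G * A) = trace (Aᵀ * G * B) := by
    rw [← trace_transpose, transpose_mul, transpose_mul, transpose_transpose, hG,
      Matrix.mul_assoc]
  simp only [transpose_add, Matrix.add_mul, Matrix.mul_add, trace_add, Matrix.mul_smul,
    trace_smul, hBA]
  ring

lemma restrict_add_restrict_compl {p q : ℕ} (Δ : Matrix (Fin p) (Fin q) ℝ) (S : Set (Fin p)) :
    restrict Δ S + restrict Δ Sᶜ = Δ := by
  ext j k
  by_cases hj : j ∈ S <;> simp [restrict, hj]

lemma trace_transpose_restrict_mul_restrict_compl {p q : ℕ} (C D : Matrix (Fin p) (Fin q) ℝ)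
    (S : Set (Fin p)) : trace ((restrict C S)ᵀ * restrict D Sᶜ) = 0 := by
  rw [trace_transpose_mul_eq_sum_dotProduct]
  refine Finset.sum_eq_zero fun j _ => ?_
  by_cases hj : j ∈ S <;> simp [restrict, hj, dotProduct]

lemma norm21_restrict_sq_le {p q : ℕ} (Δ : Matrix (Fin p) (Fin q) ℝ) (S : Set (Fin p)) :
    norm21 (restrict Δ S) ^ 2 ≤ S.ncard * frob (restrict Δ S) ^ 2 := by
  have hrow : ∀ j, rowNorm (restrict Δ S j) = if j ∈ S then rowNorm (Δ j) else 0 := by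
    intro j
    split_ifs with hj <;> simp [restrict, hj, rowNorm]
  have hcard : S.ncard = (Finset.univ.filter (· ∈ S)).card := by
    rw [Set.ncard_eq_toFinset_card']
    congr
    ext
    simp
  rw [norm21, frob_sq_eq_sum_rowNorm_sq]
  simp only [hrow, ite_pow, zero_pow two_ne_zero, ← Finset.sum_filter, hcard]
  exact sq_sum_le_card_mul_sum_sq

lemma trace_quadratic_ge_of_incoherent_of_cone {p q : ℕ} {Ψ : Matrix (Fin p) (Fin p) ℝ}
    {ε : ℝ} (hΨ : Ψ.PosSemidef) (hε : 0 ≤ ε) (hdiag : ∀ j, Ψ j j = 1)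
    (hoff : ∀ j j', j ≠ j' → |Ψ j j'| ≤ ε) (S : Set (Fin p)) (Δ : Matrix (Fin p) (Fin q) ℝ)
    (hcone : norm21 (restrict Δ Sᶜ) ≤ 3 * norm21 (restrict Δ S)) :
    (1 - 7 * ε * S.ncard) * frob (restrict Δ S) ^ 2 ≤ trace (Δᵀ * Ψ * Δ) := by
  set A := restrict Δ S
  set B := restrict Δ Sᶜ
  have hsymm : Ψᵀ = Ψ := by
    simpa [conjTranspose_eq_transpose_of_trivial] using hΨ.isHermitian.eq
  have hBB : 0 ≤ trace (Bᵀ * Ψ * B) := by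
    simpa [conjTranspose_eq_transpose_of_trivial] using
      (hΨ.conjTranspose_mul_mul_same B).trace_nonneg
  have hdiagonal : trace (Aᵀ * (A + (2 : ℝ) • B)) = frob A ^ 2 := by
    rw [Matrix.mul_add, trace_add, Matrix.mul_smul, trace_smul,
      trace_transpose_restrict_mul_restrict_compl, frob_sq_eq_trace, smul_zero, add_zero]
  have hnorm : norm21 (A + (2 : ℝ) • B) ≤ 7 * norm21 A := by
    refine (norm21_add_le _ _).trans ?_
    rw [norm21_smul, abs_two]
    linarith
  have hA0 : 0 ≤ norm21 A := Finset.sum_nonneg fun j _ => rowNorm_nonneg _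
  calc (1 - 7 * ε * S.ncard) * frob A ^ 2 = frob A ^ 2 - 7 * ε * (S.ncard * frob A ^ 2) := by
        ring
    _ ≤ frob A ^ 2 - ε * (norm21 A * (7 * norm21 A)) := by
        nlinarith [norm21_restrict_sq_le Δ S]
    _ ≤ trace (Aᵀ * (A + (2 : ℝ) • B)) - ε * (norm21 A * norm21 (A + (2 : ℝ) • B)) := by
        rw [hdiagonal]
        gcongr
    _ ≤ trace (Aᵀ * Ψ * (A + (2 : ℝ) • B)) :=
        trace_transpose_mul_sub_le_of_incoherent hε hdiag hoff _ _
    _ ≤ trace (Δᵀ * Ψ * Δ) := by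
        rw [← restrict_add_restrict_compl Δ S, trace_add_transpose_mul_mul_add hsymm]
        linarith

lemma one_div_mul_frob_mul_sq {n p q : ℕ} (X : Matrix (Fin n) (Fin p) ℝ)
    (Δ : Matrix (Fin p) (Fin q) ℝ) :
    (1 / (n : ℝ)) * frob (X * Δ) ^ 2 = trace (Δᵀ * ((1 / (n : ℝ)) • (Xᵀ * X)) * Δ) := by
  rw [frob_sq_eq_trace, transpose_mul, Matrix.mul_smul, Matrix.smul_mul, trace_smul,
    smul_eq_mul, Matrix.mul_assoc, Matrix.mul_assoc, Matrix.mul_assoc]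

lemma seven_mul_div_mul_le {α : ℝ} (hα : 0 < α) (s : ℕ) : 7 * (1 / (7 * α * s)) * s ≤ 1 / α := by
  rcases Nat.eq_zero_or_pos s with rfl | _
  · simpa using hα.le
  · exact le_of_eq (by field_simp)

theorem restricted_eigenvalue_property_general {n p q : ℕ}
    (X : Matrix (Fin n) (Fin p) ℝ) (α : ℝ) (hα : 1 < α) (s : ℕ)
    (hinc : MutualIncoherence ((1 / (n : ℝ)) • (Xᵀ * X)) α s) :
    ∀ S : Set (Fin p), S.ncard ≤ s →
      ∀ Δ : Matrix (Fin p) (Fin q) ℝ, Δ ≠ 0 →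
        norm21 (restrict Δ Sᶜ) ≤ 3 * norm21 (restrict Δ S) →
        (1 / (n : ℝ)) * (frob (X * Δ)) ^ 2 ≥ (1 - 1 / α) * (frob (restrict Δ S)) ^ 2 := by
  intro S hS Δ _ hcone
  obtain ⟨hdiag, hoff⟩ := hinc
  have hα0 : 0 < α := one_pos.trans hα
  have hΨ : ((1 / (n : ℝ)) • (Xᵀ * X)).PosSemidef := by
    simpa [conjTranspose_eq_transpose_of_trivial] using
      (posSemidef_conjTranspose_mul_self X).smul (by positivity : (0 : ℝ) ≤ 1 / n)
  have hRE := trace_quadratic_ge_of_incoherent_of_cone hΨ (by positivity) hdiag hoff S Δ hcone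
  have hε : 7 * (1 / (7 * α * s)) * S.ncard ≤ 1 / α :=
    le_trans (by gcongr) (seven_mul_div_mul_le hα0 s)
  rw [ge_iff_le, one_div_mul_frob_mul_sq]
  exact le_trans (mul_le_mul_of_nonneg_right (by linarith) (sq_nonneg _)) hRE

/-- Mutual incoherence implies the Restricted Eigenvalue Property. -/
theorem restricted_eigenvalue_property {n p q : ℕ} (hn : 0 < n)
    (X : Matrix (Fin n) (Fin p) ℝ) (α : ℝ) (hα : 1 < α) (s : ℕ) (hs : 1 ≤ s)
    (hinc : MutualIncoherence ((1 / (n : ℝ)) • (Xᵀ * X)) α s) :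
    ∀ S : Set (Fin p), S.ncard ≤ s →
      ∀ Δ : Matrix (Fin p) (Fin q) ℝ, Δ ≠ 0 →
        norm21 (restrict Δ Sᶜ) ≤ 3 * norm21 (restrict Δ S) →
        (1 / (n : ℝ)) * (frob (X * Δ)) ^ 2 ≥ (1 - 1 / α) * (frob (restrict Δ S)) ^ 2 :=
  restricted_eigenvalue_property_general X α hα s hinc
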